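/- Let (W,S) be a Coxeter system with a realization V over a commutative domain 𝕜 ⊆ ℝ, and suppose W preserves the almost-orthant for k spanned by (X,H). If s, t ∈ S satisfy X_s ∩ X_t = ∅, then the actions of s and t on V commute: the linear maps by which s and t act on V satisfy s∘t = t∘s. -/

import Mathlib

/-!
Two simple reflections commute as soon as each coroot kills the other root. The coroot `αₛ^∨`
vanishes on `H` and on `X ∖ Xₛ`, so it suffices that `αₜ` has no `x`-coordinate for `x ∉ Xₜ`.

Write `R q` for the `x_q`-coordinate of `αₜ` and `C q := αₜ^∨(x_q)`. Since
`t(x_j) = x_j - C j • αₜ` lies in the almost-orthant, `C j * R q ≤ 0` for `q ≠ j` and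
`R j * C j ≤ 1`; moreover `∑ R q * C q = αₜ^∨(αₜ) = 2`. If `C i = 0` but `R i > 0`, then every
`C q ≤ 0`; a positive term `R j * C j` then has `C j < 0`, which forces `R q ≥ 0`, hence
`R q * C q ≤ 0`, for all `q ≠ j`, and the sum is at most `1`.
-/

open Function

noncomputable section

/-- The subring `ℤ ⊆ ℝ` of integers, used to specialize the base subring `k` to `ℤ`. -/
def intSubring : Subring ℝ := (Int.castRingHom ℝ).range

/-- A *realization* of a Coxeter system `cs : CoxeterSystem M W` over a commutative domain
`𝕜 ⊆ ℝ` (encoded as a subring of `ℝ`): a `𝕜`-module `V` together with simple roots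
`root b ∈ V` and simple coroots `coroot b ∈ V*`, and a linear action `ρ` of `W` on `V`
for which each simple reflection acts by the reflection formula
`s(v) = v - ⟨coroot s, v⟩ • root s`. -/
structure Realization (𝕜 : Subring ℝ) {B W : Type*} [Group W]
    (M : CoxeterMatrix B) (cs : CoxeterSystem M W)
    (V : Type*) [AddCommGroup V] [Module 𝕜 V] where
  root : B → V
  coroot : B → (V →ₗ[𝕜] 𝕜)
  ρ : W →* (V ≃ₗ[𝕜] V)
  coroot_root_self : ∀ b, coroot b (root b) = 2
  coroot_root_eq_zero_iff : ∀ b b', b ≠ b' → (coroot b (root b') = 0 ↔ M.M b b' = 2)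
  simple_act : ∀ (b : B) (v : V), ρ (cs.simple b) v = v - coroot b v • root b

variable {𝕜 : Subring ℝ}

/-- `c ∈ k₊ := k ∩ ℝ_{≥0}`, for an element `c` of the base domain `𝕜 ⊆ ℝ`. -/
def InKPlus (k : Subring ℝ) (c : 𝕜) : Prop := (c : ℝ) ∈ k ∧ 0 ≤ (c : ℝ)

/-- The almost-orthant spanned by `(X, H)`, where `X` is the `Sum.inl` part of the `𝕜`-basis
`e` and `H` is the `Sum.inr` part: all elements of `V` whose `X`-coordinates lie in
`k₊ = k ∩ ℝ_{≥0}` and whose `H`-coordinates lie in `k`.  (When the `Sum.inr` index type is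
empty, this is the orthant spanned by the basis.) -/
def almostOrthant {V ι η : Type*} [AddCommGroup V] [Module 𝕜 V] (k : Subring ℝ)
    (e : Module.Basis (ι ⊕ η) 𝕜 V) : Set V :=
  {v | (∀ p, (e.repr v p : ℝ) ∈ k) ∧ ∀ i : ι, 0 ≤ (e.repr v (Sum.inl i) : ℝ)}

/-- The data witnessing that the Coxeter group `W`, acting via the realization `r`, preserves
a `k`-lattice (the `k`-span of the `𝕜`-basis `e` of `V`, whose `k`-basis is
`X ∪ H = {e (Sum.inl i)} ∪ {e (Sum.inr j)}`) together with the almost-orthant spanned by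
`(X, H)` inside it; each element of `H` is required to be `W`-invariant. -/
structure OrthantSetup (𝕜 k : Subring ℝ) {B W : Type*} [Group W]
    {M : CoxeterMatrix B} {cs : CoxeterSystem M W}
    {V : Type*} [AddCommGroup V] [Module 𝕜 V]
    (r : Realization 𝕜 M cs V) (ι η : Type*) where
  hk : k ≤ 𝕜
  e : Module.Basis (ι ⊕ η) 𝕜 V
  invariant : ∀ (j : η) (w : W), r.ρ w (e (Sum.inr j)) = e (Sum.inr j)
  lattice_stable : ∀ (w : W) (v : V), (∀ p, ((e.repr v p : ℝ)) ∈ k) →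
    ∀ p, ((e.repr (r.ρ w v) p : ℝ)) ∈ k
  orthant_stable : ∀ (w : W), ∀ v ∈ almostOrthant k e, r.ρ w v ∈ almostOrthant k e

namespace OrthantSetup

variable {𝕜 k : Subring ℝ} {B W : Type*} [Group W] {M : CoxeterMatrix B}
  {cs : CoxeterSystem M W} {V : Type*} [AddCommGroup V] [Module 𝕜 V]
  {r : Realization 𝕜 M cs V} {ι η : Type*}

/-- The element `xᵢ` of `X`. -/
def X (d : OrthantSetup 𝕜 k r ι η) (i : ι) : V := d.e (Sum.inl i)

/-- The element `ħⱼ` of `H`. -/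
def hbar (d : OrthantSetup 𝕜 k r ι η) (j : η) : V := d.e (Sum.inr j)

/-- `v` lies in the `k`-span of `H`. -/
def InHSpan (d : OrthantSetup 𝕜 k r ι η) (v : V) : Prop :=
  (∀ i : ι, d.e.repr v (Sum.inl i) = 0) ∧ ∀ j : η, ((d.e.repr v (Sum.inr j) : ℝ)) ∈ k

/-- The set `Xₛ ⊆ X` (identified with a set of indices) of elements of `X` moved by the
simple reflection with index `b`. -/
def moved (d : OrthantSetup 𝕜 k r ι η) (b : B) : Set ι :=
  {i | r.ρ (cs.simple b) (d.X i) ≠ d.X i}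

/-- `g` acts on `V` as a *rescaled shifted transposition* transposing `xᵢ` and `xⱼ`:
`g xᵢ = c • xⱼ + h` and `g xⱼ = c⁻¹ • (xᵢ - h)` for some `c ∈ k₊` invertible with inverse
in `k₊` and some `h` in the `k`-span of `H`, while `g` fixes all other elements of `X`. -/
def IsRST (d : OrthantSetup 𝕜 k r ι η) (g : V ≃ₗ[𝕜] V) (i j : ι) : Prop :=
  i ≠ j ∧ ∃ (c c' : 𝕜) (h : V), InKPlus k c ∧ InKPlus k c' ∧ c * c' = 1 ∧
    d.InHSpan h ∧ g (d.X i) = c • d.X j + h ∧ g (d.X j) = c' • (d.X i - h) ∧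
    ∀ z : ι, z ≠ i → z ≠ j → g (d.X z) = d.X z

/-- The transposition graph: vertices are (the indices of) the elements of `X`, and two
distinct vertices are adjacent when some simple reflection moves both of the corresponding
elements of `X` (i.e. they form the set `Xₛ` for some `s ∈ S`). -/
def transGraph (d : OrthantSetup 𝕜 k r ι η) : SimpleGraph ι where
  Adj i j := i ≠ j ∧ ∃ b : B, i ∈ d.moved b ∧ j ∈ d.moved b
  symm := by
    constructor
    intro i j h
    exact ⟨h.1.symm, h.2.choose, h.2.choose_spec.2, h.2.choose_spec.1⟩
  loopless := by
    constructor
    intro i h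
    exact h.1 rfl

end OrthantSetup

theorem eq_zero_of_cross_products_nonpos {ι : Type*} (S : Finset ι) (R C : ι → ℝ)
    (hcross : ∀ j q, j ≠ q → C j * R q ≤ 0) (hdiag : ∀ j, R j * C j ≤ 1)
    (hsum : ∑ q ∈ S, R q * C q = 2) {i : ι} (hi : C i = 0) : R i = 0 := by
  classical
  by_contra hRi
  wlog hpos : 0 < R i generalizing R C
  · refine this (-R) (-C) (fun j q hjq => ?_) (fun j => ?_) ?_ (by simp [hi]) (by simpa) ?_
    · simpa using hcross j q hjq
    · simpa using hdiag j
    · simpa using hsum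
    · simpa using lt_of_le_of_ne (not_lt.mp hpos) hRi
  have hC_nonpos : ∀ q, C q ≤ 0 := by
    intro q
    rcases eq_or_ne q i with rfl | hqi
    · exact hi.le
    · exact nonpos_of_mul_nonpos_left (hcross q i hqi) hpos
  obtain ⟨j, hjS, hj⟩ : ∃ j ∈ S, 0 < R j * C j :=
    Finset.exists_lt_of_sum_lt (by simp [hsum] : ∑ _q ∈ S, (0 : ℝ) < ∑ q ∈ S, R q * C q)
  have hCj : C j < 0 := lt_of_le_of_ne (hC_nonpos j) fun h => by simp [h] at hj
  have hrest : ∀ q ∈ S.erase j, R q * C q ≤ 0 := fun q hq =>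
    mul_nonpos_of_nonneg_of_nonpos
      (nonneg_of_mul_nonpos_right (hcross j q (Finset.ne_of_mem_erase hq).symm) hCj)
      (hC_nonpos q)
  have := Finset.add_sum_erase S (fun q => R q * C q) hjS
  linarith [Finset.sum_nonpos hrest, hdiag j]

theorem Module.Basis.apply_eq_sum_repr_mul {R M P : Type*} [CommSemiring R] [AddCommMonoid M]
    [Module R M] (e : Module.Basis P R M) (f : M →ₗ[R] R) (v : M) :
    f v = ∑ p ∈ (e.repr v).support, e.repr v p * f (e p) := by
  conv_lhs => rw [← e.linearCombination_repr v, Finsupp.linearCombination_apply]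
  simp [Finsupp.sum]

namespace Realization

variable {B W : Type*} [Group W] {M : CoxeterMatrix B} {cs : CoxeterSystem M W}
  {V : Type*} [AddCommGroup V] [Module 𝕜 V] (r : Realization 𝕜 M cs V)

theorem root_ne_zero (b : B) : r.root b ≠ 0 := fun h0 => by
  simpa [h0] using r.coroot_root_self b

theorem coroot_eq_zero_of_simple_fixed [Module.IsTorsionFree 𝕜 V] {b : B} {v : V}
    (hv : r.ρ (cs.simple b) v = v) : r.coroot b v = 0 := by
  rw [r.simple_act, sub_eq_self, smul_eq_zero] at hv
  exact hv.resolve_right (r.root_ne_zero b)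

theorem simple_comm_of_coroot_root_eq_zero {b b' : B} (h : r.coroot b (r.root b') = 0)
    (h' : r.coroot b' (r.root b) = 0) (v : V) :
    r.ρ (cs.simple b) (r.ρ (cs.simple b') v) = r.ρ (cs.simple b') (r.ρ (cs.simple b) v) := by
  simp only [r.simple_act, map_sub, map_smul, h, h', smul_eq_mul, mul_zero, sub_zero]
  exact sub_right_comm _ _ _

end Realization

namespace OrthantSetup

variable {k : Subring ℝ} {B W : Type*} [Group W] {M : CoxeterMatrix B}
  {cs : CoxeterSystem M W} {V : Type*} [AddCommGroup V] [Module 𝕜 V]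
  {r : Realization 𝕜 M cs V} {ι η : Type*} (d : OrthantSetup 𝕜 k r ι η)

theorem coroot_X_eq_zero_of_notMem_moved {b : B} {i : ι} (hi : i ∉ d.moved b) :
    r.coroot b (d.X i) = 0 :=
  haveI := Module.Free.of_basis d.e
  r.coroot_eq_zero_of_simple_fixed (not_not.mp hi)

theorem coroot_hbar_eq_zero (b : B) (j : η) : r.coroot b (d.hbar j) = 0 :=
  haveI := Module.Free.of_basis d.e
  r.coroot_eq_zero_of_simple_fixed (d.invariant j _)

theorem X_mem_almostOrthant (i : ι) : d.X i ∈ almostOrthant k d.e := by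
  classical
  refine ⟨fun p => ?_, fun q => ?_⟩ <;>
    simp only [X, Module.Basis.repr_self, Finsupp.single_apply] <;> split_ifs
  exacts [by simp [k.one_mem], by simp [k.zero_mem], zero_le_one, le_rfl]

theorem repr_simple_X (b : B) (i : ι) (p : ι ⊕ η) :
    d.e.repr (r.ρ (cs.simple b) (d.X i)) p
      = Finsupp.single (Sum.inl i) 1 p - r.coroot b (d.X i) * d.e.repr (r.root b) p := by
  simp [r.simple_act, X]

theorem coroot_X_mul_root_coord_nonpos (b : B) {i q : ι} (hiq : i ≠ q) :
    (r.coroot b (d.X i) : ℝ) * d.e.repr (r.root b) (Sum.inl q) ≤ 0 := by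
  have := (d.orthant_stable (cs.simple b) _ (d.X_mem_almostOrthant i)).2 q
  rw [repr_simple_X, Finsupp.single_eq_of_ne (by simpa using hiq.symm)] at this
  simpa using this

theorem root_coord_mul_coroot_X_le_one (b : B) (i : ι) :
    (d.e.repr (r.root b) (Sum.inl i) : ℝ) * r.coroot b (d.X i) ≤ 1 := by
  have := (d.orthant_stable (cs.simple b) _ (d.X_mem_almostOrthant i)).2 i
  rw [repr_simple_X, Finsupp.single_eq_same] at this
  push_cast at this
  linarith

theorem sum_root_coord_mul_coroot_X (b : B) :
    ∑ q ∈ (d.e.repr (r.root b)).support.preimage Sum.inl Sum.inl_injective.injOn,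
      (d.e.repr (r.root b) (Sum.inl q) : ℝ) * r.coroot b (d.X q) = 2 := by
  have h2 : ((r.coroot b (r.root b) : 𝕜) : ℝ) = 2 := by
    rw [r.coroot_root_self]; rfl
  rw [← h2, d.e.apply_eq_sum_repr_mul (r.coroot b), AddSubmonoidClass.coe_finsetSum]
  push_cast
  refine Finset.sum_preimage _ _ _ (fun p => (d.e.repr (r.root b) p : ℝ) * r.coroot b (d.e p)) ?_
  rintro (i | j) _ hp
  · exact absurd ⟨i, rfl⟩ hp
  · simp [show r.coroot b (d.e (Sum.inr j)) = 0 from d.coroot_hbar_eq_zero b j]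

theorem root_coord_eq_zero_of_notMem_moved {b : B} {i : ι} (hi : i ∉ d.moved b) :
    d.e.repr (r.root b) (Sum.inl i) = 0 := by
  have := eq_zero_of_cross_products_nonpos _ (fun q => (d.e.repr (r.root b) (Sum.inl q) : ℝ))
    (fun q => (r.coroot b (d.X q) : ℝ))
    (fun j q hjq => d.coroot_X_mul_root_coord_nonpos b hjq)
    (d.root_coord_mul_coroot_X_le_one b) (d.sum_root_coord_mul_coroot_X b)
    (i := i) (by simp [d.coroot_X_eq_zero_of_notMem_moved hi])
  exact_mod_cast this

theorem coroot_root_eq_zero_of_disjoint_moved {b b' : B} (h : d.moved b ∩ d.moved b' = ∅) :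
    r.coroot b (r.root b') = 0 := by
  rw [d.e.apply_eq_sum_repr_mul]
  refine Finset.sum_eq_zero ?_
  rintro (i | j) -
  · by_cases hib : i ∈ d.moved b
    · have hib' : i ∉ d.moved b' := fun hib' => (h.subset ⟨hib, hib'⟩ : i ∈ (∅ : Set ι))
      exact mul_eq_zero_of_left (d.root_coord_eq_zero_of_notMem_moved hib') _
    · exact mul_eq_zero_of_right _ (d.coroot_X_eq_zero_of_notMem_moved hib)
  · exact mul_eq_zero_of_right _ (d.coroot_hbar_eq_zero b j)

end OrthantSetup

theorem disjoint_supports_commute_general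
    {𝕜 k : Subring ℝ} {B W : Type*} [Group W] {M : CoxeterMatrix B}
    {cs : CoxeterSystem M W} {V : Type*} [AddCommGroup V] [Module 𝕜 V]
    {r : Realization 𝕜 M cs V} {ι η : Type*}
    (d : OrthantSetup 𝕜 k r ι η) (b b' : B)
    (h : d.moved b ∩ d.moved b' = ∅) :
    ∀ v : V, r.ρ (cs.simple b) (r.ρ (cs.simple b') v) =
      r.ρ (cs.simple b') (r.ρ (cs.simple b) v) :=
  r.simple_comm_of_coroot_root_eq_zero (d.coroot_root_eq_zero_of_disjoint_moved h)
    (d.coroot_root_eq_zero_of_disjoint_moved (Set.inter_comm _ _ ▸ h))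

/-- If `W` preserves the almost-orthant for `k` spanned by `(X, H)` and two simple
reflections `s, t` satisfy `Xₛ ∩ Xₜ = ∅`, then the actions of `s` and `t` on `V`
commute: `s ∘ t = t ∘ s` as linear maps on `V`. -/
theorem disjoint_supports_commute
    {𝕜 k : Subring ℝ} {B W : Type*} [Group W] {M : CoxeterMatrix B}
    {cs : CoxeterSystem M W} {V : Type*} [AddCommGroup V] [Module 𝕜 V] [Module.Free 𝕜 V]
    {r : Realization 𝕜 M cs V} {ι η : Type*}
    (d : OrthantSetup 𝕜 k r ι η) (b b' : B)
    (h : d.moved b ∩ d.moved b' = ∅) :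
    ∀ v : V, r.ρ (cs.simple b) (r.ρ (cs.simple b') v) =
      r.ρ (cs.simple b') (r.ρ (cs.simple b) v) :=
  disjoint_supports_commute_general d b b' h
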